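/- arXiv:0902.0411 — 2 statements merged into one kernel-verified Lean document; each statement's English description precedes it below -/
import Mathlib

section
/- Let E be a finite nonempty linearly ordered set, I an irreflexive symmetric relation on E, and X^• a finite pointed M(E,I)-set with full action satisfying the rooted-tree condition. Let x_ℓ ∈ X be a leaf, i.e. no element x″ ∈ X^• satisfies x″·e = x_ℓ for all e ∈ E, and let X′^• = (X ∖ {x_ℓ}) ⊔ {*} with the induced (well-defined) action. Then for every s ≥ 1 there is an isomorphism H_s(B(X^•)) ≅ H_s(B(X′^•)) ⊕ H_s(K(E,I)). -/
/-!
Common setup: free partially commutative monoid `M(E,I)` data, cliques of the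
commutation relation, the augmented clique chain complex `K(E,I)`, the chain
complexes `A(X^•)` and `B(X^•)` of a pointed `M(E,I)`-set, and their homology.

A pointed `M(E,I)`-set with underlying non-base part `X` is modelled as an
action `act : Option X → E → Option X`, where `none` is the base point `*`.
-/

namespace PCMHomology

variable {E : Type*} [LinearOrder E] [Fintype E]

/-- `S` is a clique for the relation `I`: distinct elements pairwise satisfy `I`. -/
def IsClique (I : E → E → Prop) (S : Finset E) : Prop :=
  ∀ a ∈ S, ∀ b ∈ S, a ≠ b → I a b

/-- The type of `s`-cliques: `s`-element subsets of `E` whose elements pairwise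
commute (satisfy `I`). -/
def Clique (I : E → E → Prop) (s : ℕ) : Type _ :=
  {S : Finset E // S.card = s ∧ IsClique I S}

/-- `p_s`, the number of `s`-cliques. -/
noncomputable def pClique (I : E → E → Prop) (s : ℕ) : ℕ :=
  Nat.card (Clique I s)

/-- Removing an element of an `(s+1)`-clique yields an `s`-clique. -/
def faceClique {I : E → E → Prop} {s : ℕ} (S : Clique I (s + 1))
    (e : {a // a ∈ S.val}) : Clique I s :=
  ⟨S.val.erase e.val, by
    refine ⟨?_, ?_⟩
    · rw [Finset.card_erase_of_mem e.property, S.property.1]; rfl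
    · intro a ha b hb hab
      exact S.property.2 a (Finset.mem_of_mem_erase ha) b
        (Finset.mem_of_mem_erase hb) hab⟩

/-- If `e` is the `k`-th element of the clique `S = {e_1 < ⋯ < e_{s+1}}` then
`posIdx S e = k - 1`, the number of elements of `S` smaller than `e`. -/
def posIdx {I : E → E → Prop} {s : ℕ} (S : Clique I (s + 1))
    (e : {a // a ∈ S.val}) : ℕ :=
  (S.val.filter (fun a => a < e.val)).card

/-- Degree-`s` component of the augmented clique chain complex `K(E,I)`:
the free abelian group on the `s`-cliques. -/
abbrev KC (I : E → E → Prop) (s : ℕ) : Type _ := Clique I s →₀ ℤ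

/-- The differential of `K(E,I)`:
`d (e_1,…,e_{s+1}) = ∑ (-1)^(k+1) (e_1,…,ê_k,…,e_{s+1})`. -/
noncomputable def Kd (I : E → E → Prop) (s : ℕ) : KC I (s + 1) →+ KC I s :=
  Finsupp.liftAddHom fun S => zmultiplesHom _
    (∑ e ∈ S.val.attach,
      ((-1 : ℤ) ^ posIdx S e) • Finsupp.single (faceClique S e) (1 : ℤ))

/-- Degree-`s` component of the chain complex `A(X^•)`: the free abelian group
on pairs `(x, S)` with `x ∈ X^•` (including the base point `* = none`) and `S`
an `s`-clique. -/
abbrev AC (I : E → E → Prop) (X : Type*) (s : ℕ) : Type _ :=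
  (Option X × Clique I s) →₀ ℤ

/-- The differential of `A(X^•)`:
`d (x; e_1,…,e_{s+1}) = ∑ (-1)^k ((x·e_k; …ê_k…) - (x; …ê_k…))`. -/
noncomputable def Ad (I : E → E → Prop) {X : Type*}
    (act : Option X → E → Option X) (s : ℕ) : AC I X (s + 1) →+ AC I X s :=
  Finsupp.liftAddHom fun p => zmultiplesHom _
    (∑ e ∈ p.2.val.attach, ((-1 : ℤ) ^ (posIdx p.2 e + 1)) •
      (Finsupp.single (act p.1 e.val, faceClique p.2 e) (1 : ℤ)
        - Finsupp.single (p.1, faceClique p.2 e) (1 : ℤ)))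

/-- Degree-`s` component of the chain complex `B(X^•)`: the free abelian group
on pairs `(x, S)` with `x ∈ X` (so `x ≠ *`) and `S` an `s`-clique. -/
abbrev BC (I : E → E → Prop) (X : Type*) (s : ℕ) : Type _ :=
  (X × Clique I s) →₀ ℤ

/-- The generator `(x·e; T)` of `B(X^•)`, interpreted as `0` when `x·e = *`. -/
noncomputable def bGen {I : E → E → Prop} {X : Type*} {s : ℕ} (o : Option X) (T : Clique I s) :
    BC I X s :=
  o.elim 0 (fun y => Finsupp.single (y, T) (1 : ℤ))

/-- The differential of `B(X^•)`:
`d (x; e_1,…,e_{s+1}) = ∑ (-1)^k ((x·e_k; …ê_k…) - (x; …ê_k…))`, with a term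
`(x·e_k; T)` interpreted as `0` when `x·e_k = *`. -/
noncomputable def Bd (I : E → E → Prop) {X : Type*}
    (act : Option X → E → Option X) (s : ℕ) : BC I X (s + 1) →+ BC I X s :=
  Finsupp.liftAddHom fun p => zmultiplesHom _
    (∑ e ∈ p.2.val.attach, ((-1 : ℤ) ^ (posIdx p.2 e + 1)) •
      (bGen (act (some p.1) e.val) (faceClique p.2 e)
        - Finsupp.single (p.1, faceClique p.2 e) (1 : ℤ)))

/-- Homology at `C1` of `C2 -d2→ C1 -d1→ C0`: the kernel of `d1` modulo (its
intersection with) the image of `d2`. -/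
abbrev homologyOf {C2 C1 C0 : Type*} [AddCommGroup C2] [AddCommGroup C1]
    [AddCommGroup C0] (d1 : C1 →+ C0) (d2 : C2 →+ C1) : Type _ :=
  d1.ker ⧸ ((d2.range).addSubgroupOf d1.ker)

/-- The homology groups of a nonnegatively graded chain complex `(C, d)`;
in degree `0` this is `C 0 / im (d 0)`. -/
def Hmlgy (C : ℕ → Type*) [∀ n, AddCommGroup (C n)]
    (d : ∀ n, C (n + 1) →+ C n) : ℕ → Type _
  | 0 => homologyOf (0 : C 0 →+ PUnit.{1}) (d 0)
  | (s + 1) => homologyOf (d s) (d (s + 1))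

instance hmlgyAddCommGroup (C : ℕ → Type*) [∀ n, AddCommGroup (C n)]
    (d : ∀ n, C (n + 1) →+ C n) : ∀ s, AddCommGroup (Hmlgy C d s)
  | 0 => inferInstanceAs (AddCommGroup (homologyOf (0 : C 0 →+ PUnit.{1}) (d 0)))
  | (s + 1) => inferInstanceAs (AddCommGroup (homologyOf (d s) (d (s + 1))))

end PCMHomology

/-!
For a full action all the generators `x · e` coincide with `f x`, where `f = (· · e0)`, so the
differential of `B(X^•)` factors as `d₀ ∘ (1 - T)`: here `d₀` is the differential for the trivial
action (every `x · e = *`), which is `|X|` copies of `K(E,I)`, and `T` is the endomorphism induced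
by `f`. The rooted-tree condition makes `T` nilpotent, so `1 - T` is an automorphism commuting with
`d₀`, and precomposing differentials with such automorphisms does not change homology. Thus
`H_s(B(X^•)) ≅ H_s(B₀(X))` and likewise for `X'`, while `X = X' ⊔ {x_ℓ}` splits `B₀(X)` as the
complex `B₀(X') ⊕ K(E,I)`.
-/

namespace PCMHomology

section Homology

variable {G G' : Type*} [AddCommGroup G] [AddCommGroup G']

noncomputable def subquotientEquiv {K R : AddSubgroup G} {K' R' : AddSubgroup G'} (e : G ≃+ G')
    (hK : K.map e.toAddMonoidHom = K') (hR : R.map e.toAddMonoidHom = R') :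
    K ⧸ R.addSubgroupOf K ≃+ K' ⧸ R'.addSubgroupOf K' :=
  QuotientAddGroup.congr _ _ ((e.addSubgroupMap K).trans (AddEquiv.addSubgroupCongr hK)) <| by
    subst hK hR
    ext ⟨y, hy⟩
    obtain ⟨x, hx, rfl⟩ := AddSubgroup.mem_map.mp hy
    simp only [AddSubgroup.mem_map, AddSubgroup.mem_addSubgroupOf, Subtype.exists]
    constructor
    · rintro ⟨z, _, hzR, hze⟩
      exact ⟨z, hzR, congrArg Subtype.val hze⟩
    · intro h
      exact ⟨x, hx, by simpa using h, rfl⟩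

noncomputable def subquotientProdEquiv (K R : AddSubgroup G) (K' R' : AddSubgroup G') :
    K.prod K' ⧸ (R.prod R').addSubgroupOf (K.prod K') ≃+
      (K ⧸ R.addSubgroupOf K) × (K' ⧸ R'.addSubgroupOf K') :=
  (QuotientAddGroup.congr _ _ (K.prodEquiv K') <| by
    ext ⟨⟨y, hy⟩, ⟨y', hy'⟩⟩
    simp only [AddSubgroup.mem_map, AddSubgroup.mem_addSubgroupOf, AddSubgroup.mem_prod,
      Subtype.exists, Prod.exists, Prod.ext_iff]
    constructor
    · rintro ⟨a, b, _, ⟨ha, hb⟩, h, h'⟩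
      obtain rfl : a = y := congrArg Subtype.val h
      obtain rfl : b = y' := congrArg Subtype.val h'
      exact ⟨ha, hb⟩
    · rintro ⟨h, h'⟩
      exact ⟨y, y', ⟨hy, hy'⟩, ⟨h, h'⟩, rfl, rfl⟩).trans (QuotientAddGroup.prodAddEquiv _ _)

variable {C2 C1 C0 C2' C1' C0' : Type*}
  [AddCommGroup C2] [AddCommGroup C1] [AddCommGroup C0]
  [AddCommGroup C2'] [AddCommGroup C1'] [AddCommGroup C0']

noncomputable def homologyOfEquivOfComm {d1 : C1 →+ C0} {d2 : C2 →+ C1}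
    {d1' : C1' →+ C0'} {d2' : C2' →+ C1'}
    (e2 : C2 ≃+ C2') (e1 : C1 ≃+ C1') (e0 : C0 ≃+ C0')
    (h1 : ∀ x, d1' (e1 x) = e0 (d1 x)) (h2 : ∀ x, d2' (e2 x) = e1 (d2 x)) :
    homologyOf d1 d2 ≃+ homologyOf d1' d2' :=
  subquotientEquiv e1
    (by
      ext y
      rw [AddSubgroup.mem_map_equiv, AddMonoidHom.mem_ker, AddMonoidHom.mem_ker,
        ← e0.map_eq_zero_iff, ← h1, e1.apply_symm_apply])
    (by
      have h : e1.toAddMonoidHom.comp d2 = d2'.comp e2.toAddMonoidHom := by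
        ext x; exact (h2 x).symm
      rw [← AddMonoidHom.range_comp, h, AddMonoidHom.range_comp,
        AddMonoidHom.range_eq_top.mpr e2.surjective, ← AddMonoidHom.range_eq_map])

noncomputable def homologyOfCompEquiv {d1 d1' : C1 →+ C0} {d2 d2' : C2 →+ C1}
    (φ1 : C1 ≃+ C1) (φ2 : C2 ≃+ C2) (hd1 : ∀ x, d1' x = d1 (φ1 x))
    (hd2 : ∀ x, d2' x = d2 (φ2 x)) (h : ∀ x, φ1 (d2 x) = d2 (φ2 x)) :
    homologyOf d1' d2' ≃+ homologyOf d1 d2 :=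
  homologyOfEquivOfComm (φ2.trans φ2) φ1 (AddEquiv.refl _) (fun x => (hd1 x).symm)
    (fun x => by rw [hd2, h]; rfl)

noncomputable def homologyOfProdEquiv (d1 : C1 →+ C0) (d2 : C2 →+ C1)
    (d1' : C1' →+ C0') (d2' : C2' →+ C1') :
    homologyOf (d1.prodMap d1') (d2.prodMap d2') ≃+
      homologyOf d1 d2 × homologyOf d1' d2' :=
  (subquotientEquiv (AddEquiv.refl _) (by simp [AddMonoidHom.ker_prodMap])
    (by simp [AddMonoidHom.range_prodMap])).trans (subquotientProdEquiv _ _ _ _)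

noncomputable def addEquivOfIsUnit {M : Type*} [AddCommGroup M] {φ : AddMonoid.End M}
    (h : IsUnit φ) : M ≃+ M :=
  AddMonoidHom.toAddEquiv φ ↑h.unit⁻¹ h.unit.inv_mul h.unit.mul_inv

end Homology

section Transition

variable {E : Type*} {I : E → E → Prop} {X : Type*} {s : ℕ}

variable (I) in
noncomputable def transition (f : Option X → Option X) (s : ℕ) : AddMonoid.End (BC I X s) :=
  Finsupp.liftAddHom fun p => zmultiplesHom _ (bGen (f (some p.1)) p.2)

lemma transition_some (f : Option X → Option X) (x : X) (S : Clique I s) :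
    transition I f s (bGen (some x) S) = bGen (f (some x)) S := by
  change Finsupp.liftAddHom (fun p : X × Clique I s => zmultiplesHom _ (bGen (f (some p.1)) p.2))
    (Finsupp.single (x, S) 1) = _
  rw [Finsupp.liftAddHom_apply_single, zmultiplesHom_apply, one_zsmul]

lemma transition_bGen {f : Option X → Option X} (hf : f none = none) (o : Option X)
    (S : Clique I s) : transition I f s (bGen o S) = bGen (f o) S := by
  cases o with
  | none => simp [bGen, hf]
  | some x => exact transition_some f x S

lemma transition_pow_bGen {f : Option X → Option X} (hf : f none = none) (k : ℕ) (o : Option X)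
    (S : Clique I s) : (transition I f s ^ k) (bGen o S) = bGen (f^[k] o) S := by
  rw [AddMonoid.End.coe_pow]
  have h : Function.Semiconj (bGen · S) f (transition I f s) :=
    fun o => (transition_bGen hf o S).symm
  exact (h.iterate_right k o).symm

lemma transition_pow_eq_zero {f : Option X → Option X} (hf : f none = none) {N : ℕ}
    (hN : ∀ x, f^[N] (some x) = none) : transition I f s ^ N = 0 := by
  refine Finsupp.addHom_ext' fun p => AddMonoidHom.ext_int ?_
  change (transition I f s ^ N) (bGen (some p.1) p.2) = 0
  rw [transition_pow_bGen hf, hN]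
  rfl

lemma exists_iterate_eq_none [Finite X] {f : Option X → Option X} (hf : f none = none)
    (h : ∀ x, ∃ k, f^[k] (some x) = none) : ∃ N, ∀ x, f^[N] (some x) = none := by
  choose k hk using h
  obtain ⟨N, hN⟩ := (Set.finite_range k).bddAbove
  refine ⟨N, fun x => ?_⟩
  obtain ⟨m, hm⟩ := Nat.exists_eq_add_of_le (hN ⟨x, rfl⟩)
  rw [hm, add_comm, Function.iterate_add_apply, hk x, Function.iterate_fixed hf]

lemma isNilpotent_transition [Finite X] {f : Option X → Option X} (hf : f none = none)
    (h : ∀ x, ∃ k, f^[k] (some x) = none) (s : ℕ) : IsNilpotent (transition I f s) :=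
  let ⟨N, hN⟩ := exists_iterate_eq_none hf h
  ⟨N, transition_pow_eq_zero hf hN⟩

end Transition

section Split

variable {E : Type*} {I : E → E → Prop} {X : Type*} {s : ℕ}

variable (I) in
open Classical in
noncomputable def splitEquiv (x₀ : X) (s : ℕ) : BC I X s ≃+ BC I {y // y ≠ x₀} s × KC I s :=
  (Finsupp.domCongr (((Equiv.optionSubtypeNe x₀).symm.prodCongr (Equiv.refl _)).trans
    optionProdEquiv)).trans
    (Finsupp.sumFinsuppAddEquivProdFinsupp.trans AddEquiv.prodComm)

lemma splitEquiv_single_self (x₀ : X) (S : Clique I s) :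
    splitEquiv I x₀ s (Finsupp.single (x₀, S) 1) = (0, Finsupp.single S 1) := by
  simp [splitEquiv]

lemma splitEquiv_single_of_ne {x x₀ : X} (hx : x ≠ x₀) (S : Clique I s) :
    splitEquiv I x₀ s (Finsupp.single (x, S) 1) = (Finsupp.single (⟨x, hx⟩, S) 1, 0) := by
  simp [splitEquiv, hx]

end Split

section Chains

variable {E : Type*} [LinearOrder E] {I : E → E → Prop} {X : Type*} {s : ℕ}

/-- `B(X^•)` for the trivial action `x · e = *` is `|X|` copies of `K(E,I)`. -/
noncomputable abbrev Bd₀ (I : E → E → Prop) (X : Type*) (s : ℕ) : BC I X (s + 1) →+ BC I X s :=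
  Bd I (fun (_ : Option X) (_ : E) => none) s

lemma Bd_single (act : Option X → E → Option X) (x : X) (S : Clique I (s + 1)) :
    Bd I act s (Finsupp.single (x, S) 1) = ∑ e ∈ S.val.attach, (-1 : ℤ) ^ (posIdx S e + 1) •
      (bGen (act (some x) e) (faceClique S e) - Finsupp.single (x, faceClique S e) 1) := by
  simp [Bd]

lemma Bd₀_bGen (o : Option X) (S : Clique I (s + 1)) :
    Bd₀ I X s (bGen o S) = ∑ e ∈ S.val.attach, (-1 : ℤ) ^ posIdx S e • bGen o (faceClique S e) := by
  cases o with
  | none => simp [bGen]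
  | some x => simp [bGen, Bd_single, pow_succ]

lemma Kd_single (S : Clique I (s + 1)) :
    Kd I s (Finsupp.single S 1) =
      ∑ e ∈ S.val.attach, (-1 : ℤ) ^ posIdx S e • Finsupp.single (faceClique S e) 1 := by
  simp [Kd]

lemma Bd₀_single (x : X) (S : Clique I (s + 1)) :
    Bd₀ I X s (Finsupp.single (x, S) 1) =
      ∑ e ∈ S.val.attach, (-1 : ℤ) ^ posIdx S e • Finsupp.single (x, faceClique S e) 1 :=
  Bd₀_bGen (some x) S

lemma transition_comm_Bd₀ (f : Option X → Option X) (z : BC I X (s + 1)) :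
    transition I f s (Bd₀ I X s z) = Bd₀ I X s (transition I f (s + 1) z) := by
  suffices h : (transition I f s : BC I X s →+ BC I X s).comp (Bd₀ I X s) =
      (Bd₀ I X s).comp (transition I f (s + 1)) from DFunLike.congr_fun h z
  refine Finsupp.addHom_ext' fun ⟨x, S⟩ => AddMonoidHom.ext_int ?_
  change transition I f s (Bd₀ I X s (bGen (some x) S)) =
    Bd₀ I X s (transition I f (s + 1) (bGen (some x) S))
  simp only [Bd₀_bGen, transition_some, map_sum, map_zsmul]

lemma Bd_eq_Bd₀_one_sub_transition (act : Option X → E → Option X)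
    (hfull : ∀ o e e', act o e = act o e') (e0 : E) (z : BC I X (s + 1)) :
    Bd I act s z = Bd₀ I X s ((1 - transition I (act · e0) (s + 1)) z) := by
  suffices h : Bd I act s = (Bd₀ I X s).comp (1 - transition I (act · e0) (s + 1)) from
    DFunLike.congr_fun h z
  refine Finsupp.addHom_ext' fun ⟨x, S⟩ => AddMonoidHom.ext_int ?_
  change Bd I act s (Finsupp.single (x, S) 1) =
    Bd₀ I X s (bGen (some x) S - transition I (act · e0) (s + 1) (bGen (some x) S))
  rw [Bd_single, map_sub, transition_some, Bd₀_bGen, Bd₀_bGen, ← Finset.sum_sub_distrib]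
  refine Finset.sum_congr rfl fun e _ => ?_
  rw [hfull _ e e0, pow_succ, mul_neg_one, neg_smul, ← smul_neg, neg_sub, smul_sub]
  rfl

noncomputable def homologyBdEquivBd₀ [Finite X] (act : Option X → E → Option X)
    (hstar : ∀ e, act none e = none) (hfull : ∀ o e e', act o e = act o e') (e0 : E)
    (htree : ∀ x, ∃ k, (act · e0)^[k] (some x) = none) (s : ℕ) :
    homologyOf (Bd I act s) (Bd I act (s + 1)) ≃+ homologyOf (Bd₀ I X s) (Bd₀ I X (s + 1)) :=
  let φ t := addEquivOfIsUnit (isNilpotent_transition (I := I) (hstar e0) htree t).isUnit_one_sub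
  homologyOfCompEquiv (φ (s + 1)) (φ (s + 2)) (Bd_eq_Bd₀_one_sub_transition act hfull e0)
    (Bd_eq_Bd₀_one_sub_transition act hfull e0) fun z => by
      change Bd₀ I X _ z - transition I _ _ (Bd₀ I X _ z) =
        Bd₀ I X _ (z - transition I _ _ z)
      rw [map_sub, transition_comm_Bd₀]

lemma splitEquiv_comm_Bd₀ (x₀ : X) (z : BC I X (s + 1)) :
    (Bd₀ I {y // y ≠ x₀} s).prodMap (Kd I s) (splitEquiv I x₀ (s + 1) z) =
      splitEquiv I x₀ s (Bd₀ I X s z) := by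
  suffices h : ((Bd₀ I _ s).prodMap (Kd I s)).comp (splitEquiv I x₀ (s + 1)).toAddMonoidHom =
      (splitEquiv I x₀ s).toAddMonoidHom.comp (Bd₀ I X s) from DFunLike.congr_fun h z
  refine Finsupp.addHom_ext' fun ⟨x, S⟩ => AddMonoidHom.ext_int ?_
  change (Bd₀ I _ s).prodMap (Kd I s) (splitEquiv I x₀ (s + 1) (Finsupp.single (x, S) 1)) =
    splitEquiv I x₀ s (Bd₀ I X s (Finsupp.single (x, S) 1))
  by_cases hx : x = x₀
  · subst hx
    simp only [Bd₀_single, map_sum, map_zsmul, splitEquiv_single_self]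
    ext1 <;> simp [Prod.fst_sum, Prod.snd_sum, Kd_single]
  · simp only [Bd₀_single, map_sum, map_zsmul, splitEquiv_single_of_ne hx]
    ext1 <;> simp [Prod.fst_sum, Prod.snd_sum, Bd₀_single]

noncomputable def homologyBd₀SplitEquiv (x₀ : X) (s : ℕ) :
    homologyOf (Bd₀ I X s) (Bd₀ I X (s + 1)) ≃+
      homologyOf (Bd₀ I {y // y ≠ x₀} s) (Bd₀ I {y // y ≠ x₀} (s + 1)) ×
        homologyOf (Kd I s) (Kd I (s + 1)) :=
  (homologyOfEquivOfComm (splitEquiv I x₀ (s + 2)) (splitEquiv I x₀ (s + 1))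
    (splitEquiv I x₀ s) (splitEquiv_comm_Bd₀ x₀) (splitEquiv_comm_Bd₀ x₀)).trans
    (homologyOfProdEquiv _ _ _ _)

end Chains

theorem stmt6_general {E : Type*} [LinearOrder E]
    (I : E → E → Prop)
    (X : Type*) [Finite X]
    (act : Option X → E → Option X)
    (hstar : ∀ e, act none e = none)
    (hfull : ∀ o e e', act o e = act o e')
    (e0 : E)
    (htree : ∀ x : X, ∃ k : ℕ, (fun o => act o e0)^[k] (some x) = none)
    (xl : X)
    (act' : Option {y : X // y ≠ xl} → E → Option {y : X // y ≠ xl})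
    (hact' : ∀ (o : Option {y : X // y ≠ xl}) (e : E),
      Option.map Subtype.val (act' o e) = act (Option.map Subtype.val o) e) :
    ∀ s : ℕ, 1 ≤ s → Nonempty
      (Hmlgy (BC I X) (Bd I act) s ≃+
        (Hmlgy (BC I {y : X // y ≠ xl}) (Bd I act') s)
          × (Hmlgy (KC I) (Kd I) s)) := by
  rintro (_ | s) hs
  · exact absurd hs (by norm_num)
  have hval : Function.Injective (Option.map (Subtype.val : {y : X // y ≠ xl} → X)) :=
    Option.map_injective Subtype.val_injective
  have hstar' (e : E) : act' none e = none := hval (by rw [hact', Option.map_none, hstar])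
  have hfull' (o : Option _) (e e' : E) : act' o e = act' o e' :=
    hval (by rw [hact', hact', hfull])
  have htree' (y : {y : X // y ≠ xl}) : ∃ k, (act' · e0)^[k] (some y) = none := by
    obtain ⟨k, hk⟩ := htree y
    have hsemiconj : Function.Semiconj (Option.map Subtype.val) (act' · e0) (act · e0) :=
      fun o => hact' o e0
    exact ⟨k, hval (by rw [hsemiconj.iterate_right k]; exact hk)⟩
  exact ⟨(homologyBdEquivBd₀ act hstar hfull e0 htree s).trans <|
    (homologyBd₀SplitEquiv xl s).trans <|
      (homologyBdEquivBd₀ act' hstar' hfull' e0 htree' s).symm.prodCongr (AddEquiv.refl _)⟩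

/-- Let `X^•` be a finite pointed `M(E,I)`-set with full
action satisfying the rooted-tree condition, let `xl ∈ X` be a leaf (no
`x'' ∈ X^•` satisfies `x''·e = xl` for all `e`), and let `X'^•` be
`(X ∖ {xl}) ⊔ {*}` with the induced action `act'` (characterized by
compatibility with `act` under the inclusion). Then for every `s ≥ 1`,
`H_s(B(X^•)) ≅ H_s(B(X'^•)) ⊕ H_s(K(E,I))`. -/
theorem stmt6 {E : Type*} [LinearOrder E] [Fintype E] [Nonempty E]
    (I : E → E → Prop) (hirr : ∀ e, ¬ I e e) (hsym : ∀ e e', I e e' → I e' e)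
    (X : Type*) [Finite X]
    (act : Option X → E → Option X)
    (hstar : ∀ e, act none e = none)
    (hcomm : ∀ o e e', I e e' → act (act o e) e' = act (act o e') e)
    (hfull : ∀ o e e', act o e = act o e')
    (e0 : E)
    (htree : ∀ x : X, ∃ k : ℕ, (fun o => act o e0)^[k] (some x) = none)
    (xl : X)
    (hleaf : ¬ ∃ x'' : Option X, ∀ e : E, act x'' e = some xl)
    (act' : Option {y : X // y ≠ xl} → E → Option {y : X // y ≠ xl})
    (hact' : ∀ (o : Option {y : X // y ≠ xl}) (e : E),
      Option.map Subtype.val (act' o e) = act (Option.map Subtype.val o) e) :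
    ∀ s : ℕ, 1 ≤ s → Nonempty
      (Hmlgy (BC I X) (Bd I act) s ≃+
        (Hmlgy (BC I {y : X // y ≠ xl}) (Bd I act') s)
          × (Hmlgy (KC I) (Kd I) s)) :=
  stmt6_general I X act hstar hfull e0 htree xl act' hact'

end PCMHomology
end

section
/- (Negative answer to the motivating question.) For every finite nonempty linearly ordered set E and every irreflexive symmetric relation I on E, there exist two finite pointed M(E,I)-sets X^• and Y^• that are not isomorphic as pointed M(E,I)-sets (there is no base-point-preserving bijection φ : X^• → Y^• with φ(x·e) = φ(x)·e for all x and all e ∈ E), yet H_s(A(X^•)) ≅ H_s(A(Y^•)) for every s ≥ 0. Hence isomorphism of all homology groups of pointed M(E,I)-sets does not imply isomorphism of the M(E,I)-sets themselves. -/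
namespace PCMHomology

/-!
The chain complex `A(X^•)` treats the base point like any other element: only the
underlying set of `X^•` and the maps `x ↦ x·e` enter. Hence a bijection of underlying
sets commuting with the action, even one that moves the base point, induces an
isomorphism of chain complexes and so of homology. On `{*, a, b}`, the action in which
every `e` sends `a ↦ *, b ↦ b` and the one in which every `e` sends `a ↦ b, b ↦ b`
are conjugate by the transposition of `*` and `b`; they are not isomorphic as pointed
sets, since only the first sends a point other than `*` to `*`.
-/

section HomologyCongr

variable {C2 C1 C0 C2' C1' C0' : Type*} [AddCommGroup C2] [AddCommGroup C1]
  [AddCommGroup C0] [AddCommGroup C2'] [AddCommGroup C1'] [AddCommGroup C0']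

theorem ker_map_eq_ker_of_comm {d1 : C1 →+ C0} {d1' : C1' →+ C0'} (e1 : C1 ≃+ C1')
    (e0 : C0 ≃+ C0') (h1 : ∀ x, e0 (d1 x) = d1' (e1 x)) :
    d1.ker.map e1.toAddMonoidHom = d1'.ker := by
  ext y
  obtain ⟨x, rfl⟩ := e1.surjective y
  rw [AddSubgroup.mem_map_equiv, e1.symm_apply_apply, AddMonoidHom.mem_ker,
    AddMonoidHom.mem_ker, ← h1, AddEquiv.map_eq_zero_iff]

noncomputable def homologyOfCongr {d1 : C1 →+ C0} {d2 : C2 →+ C1} {d1' : C1' →+ C0'}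
    {d2' : C2' →+ C1'} (e2 : C2 ≃+ C2') (e1 : C1 ≃+ C1') (e0 : C0 ≃+ C0')
    (h1 : ∀ x, e0 (d1 x) = d1' (e1 x)) (h2 : ∀ x, e1 (d2 x) = d2' (e2 x)) :
    homologyOf d1 d2 ≃+ homologyOf d1' d2' := by
  let eKer : d1.ker ≃+ d1'.ker :=
    (e1.addSubgroupMap d1.ker).trans
      (AddEquiv.addSubgroupCongr (ker_map_eq_ker_of_comm e1 e0 h1))
  refine QuotientAddGroup.congr _ _ eKer ?_
  ext ⟨y, hy⟩
  obtain ⟨x, rfl⟩ := e1.surjective y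
  simp only [AddSubgroup.mem_map, AddSubgroup.mem_addSubgroupOf, AddMonoidHom.mem_range]
  constructor
  · rintro ⟨⟨_, _⟩, ⟨z, rfl⟩, hz⟩
    exact ⟨e2 z, by rw [← h2]; exact congrArg Subtype.val hz⟩
  · rintro ⟨w, hw⟩
    obtain ⟨z, rfl⟩ := e2.surjective w
    obtain rfl : d2 z = x := e1.injective (by rw [h2, hw])
    exact ⟨⟨d2 z, e0.map_eq_zero_iff.mp ((h1 _).trans hy)⟩, ⟨z, rfl⟩, rfl⟩

end HomologyCongr

noncomputable def hmlgyCongr {C C' : ℕ → Type*} [∀ n, AddCommGroup (C n)]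
    [∀ n, AddCommGroup (C' n)] {d : ∀ n, C (n + 1) →+ C n} {d' : ∀ n, C' (n + 1) →+ C' n}
    (e : ∀ n, C n ≃+ C' n) (he : ∀ n x, e n (d n x) = d' n (e (n + 1) x)) :
    ∀ s, Hmlgy C d s ≃+ Hmlgy C' d' s
  | 0 => homologyOfCongr (e 1) (e 0) (AddEquiv.refl PUnit) (fun _ => rfl) (he 0)
  | s + 1 => homologyOfCongr (e (s + 2)) (e (s + 1)) (e s) (he s) (he (s + 1))

section ChainComplexA

variable {E : Type*} (I : E → E → Prop) {X Y : Type*}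

noncomputable def acCongr (ψ : Option X ≃ Option Y) (s : ℕ) : AC I X s ≃+ AC I Y s :=
  Finsupp.domCongr (ψ.prodCongr (Equiv.refl (Clique I s)))

@[simp]
theorem acCongr_single (ψ : Option X ≃ Option Y) {s : ℕ} (o : Option X) (S : Clique I s)
    (n : ℤ) : acCongr I ψ s (Finsupp.single (o, S) n) = Finsupp.single (ψ o, S) n :=
  Finsupp.equivMapDomain_single _ _ _

theorem acCongr_Ad [LinearOrder E] {actX : Option X → E → Option X} {actY : Option Y → E → Option Y}
    (ψ : Option X ≃ Option Y) (hψ : ∀ o e, ψ (actX o e) = actY (ψ o) e) (s : ℕ)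
    (x : AC I X (s + 1)) :
    acCongr I ψ s (Ad I actX s x) = Ad I actY s (acCongr I ψ (s + 1) x) := by
  induction x using Finsupp.induction_linear with
  | zero => simp only [map_zero]
  | add x y hx hy => simp only [map_add, hx, hy]
  | single p n =>
    obtain ⟨o, S⟩ := p
    simp only [Ad, Finsupp.liftAddHom_apply_single, zmultiplesHom_apply, map_zsmul, map_sum,
      map_sub, acCongr_single, hψ]

end ChainComplexA

-- `{*, a, b}` is `Option Bool` with `a = some false` and `b = some true`.
def sendFalseToBase : Option Bool → Option Bool
  | some true => some true
  | _ => none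

def sendFalseToTrue : Option Bool → Option Bool
  | none => none
  | some _ => some true

theorem swap_sendFalseToBase (o : Option Bool) :
    Equiv.swap none (some true) (sendFalseToBase o) =
      sendFalseToTrue (Equiv.swap none (some true) o) := by
  revert o; decide

theorem not_exists_pointed_conj :
    ¬ ∃ φ : Option Bool ≃ Option Bool,
      φ none = none ∧ ∀ o, φ (sendFalseToBase o) = sendFalseToTrue (φ o) := by
  rintro ⟨φ, hnone, hφ⟩
  have hfalse : φ (some false) = none := by
    cases h : φ (some false) with
    | none => rfl
    | some b => simpa [sendFalseToBase, sendFalseToTrue, hnone, h] using hφ (some false)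
  exact Option.some_ne_none false (φ.injective (hfalse.trans hnone.symm))

theorem stmt12_general {E : Type*} [LinearOrder E] [Nonempty E]
    (I : E → E → Prop) :
    ∃ (X Y : Type) (actX : Option X → E → Option X)
      (actY : Option Y → E → Option Y),
      Finite X ∧ Finite Y ∧
      (∀ e, actX none e = none) ∧
      (∀ e, actY none e = none) ∧
      (∀ o e e', I e e' → actX (actX o e) e' = actX (actX o e') e) ∧
      (∀ o e e', I e e' → actY (actY o e) e' = actY (actY o e') e) ∧
      (¬ ∃ φ : Option X ≃ Option Y,
          φ none = none ∧ ∀ (o : Option X) (e : E), φ (actX o e) = actY (φ o) e) ∧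
      (∀ s : ℕ, Nonempty
        (Hmlgy (AC I X) (Ad I actX) s ≃+ Hmlgy (AC I Y) (Ad I actY) s)) := by
  refine ⟨Bool, Bool, fun o _ => sendFalseToBase o, fun o _ => sendFalseToTrue o,
    inferInstance, inferInstance, fun _ => rfl, fun _ => rfl,
    fun _ _ _ _ => rfl, fun _ _ _ _ => rfl, ?_, fun s => ⟨?_⟩⟩
  · rintro ⟨φ, hnone, hφ⟩
    exact not_exists_pointed_conj ⟨φ, hnone, fun o => hφ o (Classical.arbitrary E)⟩
  · exact hmlgyCongr (acCongr I _)
      (acCongr_Ad I _ fun o _ => swap_sendFalseToBase o) s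

/-- **negative answer to the motivating question.** For every
finite nonempty linearly ordered `E` and every irreflexive symmetric relation
`I` on `E`, there exist two finite pointed `M(E,I)`-sets `X^•` and `Y^•` that
are not isomorphic as pointed `M(E,I)`-sets, yet have isomorphic homology
`H_s(A(X^•)) ≅ H_s(A(Y^•))` for every `s ≥ 0`. -/
theorem stmt12 {E : Type*} [LinearOrder E] [Fintype E] [Nonempty E]
    (I : E → E → Prop) (hirr : ∀ e, ¬ I e e) (hsym : ∀ e e', I e e' → I e' e) :
    ∃ (X Y : Type) (actX : Option X → E → Option X)
      (actY : Option Y → E → Option Y),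
      Finite X ∧ Finite Y ∧
      (∀ e, actX none e = none) ∧
      (∀ e, actY none e = none) ∧
      (∀ o e e', I e e' → actX (actX o e) e' = actX (actX o e') e) ∧
      (∀ o e e', I e e' → actY (actY o e) e' = actY (actY o e') e) ∧
      (¬ ∃ φ : Option X ≃ Option Y,
          φ none = none ∧ ∀ (o : Option X) (e : E), φ (actX o e) = actY (φ o) e) ∧
      (∀ s : ℕ, Nonempty
        (Hmlgy (AC I X) (Ad I actX) s ≃+ Hmlgy (AC I Y) (Ad I actY) s)) :=
  stmt12_general I

end PCMHomology
end
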